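/- arXiv:2110.09611 — 2 statements merged into one kernel-verified Lean document; each statement's English description precedes it below -/
import Mathlib

section
/- For an orthonormal set {u, v} in ℝ^8, the linear map J_{u∧v} : ℝ^8 → ℝ^8 defined by J_{u∧v}(w) = X(u,v,w) is skew-symmetric, vanishes on span{u,v}, preserves the orthogonal complement (u∧v)^⊥, and satisfies J_{u∧v}² = -id on (u∧v)^⊥; in particular tr(J_{u∧v}^t J_{u∧v}) = 6. -/
open scoped RealInnerProductSpace

noncomputable section

abbrev Oct : Type := EuclideanSpace ℝ (Fin 8)

def octe (i : Fin 8) : Oct := EuclideanSpace.single i 1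

def plusTriples : List (Fin 8 × Fin 8 × Fin 8) :=
  [(1,2,3),(1,4,5),(1,7,6),(2,4,6),(2,5,7),(3,4,7),(3,6,5)]

/-- Completely skew-symmetric structure tensor taking the value `+1` on the
triples 123, 145, 176, 246, 257, 347, 365. -/
def eps (i j k : Fin 8) : ℝ :=
  if plusTriples.any (fun t => decide ((i,j,k) = t ∨ (i,j,k) = (t.2.1, t.2.2, t.1) ∨
      (i,j,k) = (t.2.2, t.1, t.2.1))) then 1
  else if plusTriples.any (fun t => decide ((i,j,k) = (t.1, t.2.2, t.2.1) ∨
      (i,j,k) = (t.2.2, t.2.1, t.1) ∨ (i,j,k) = (t.2.1, t.1, t.2.2))) then -1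
  else 0

/-- Structure constants of octonion multiplication:
`e_0 e_i = e_i e_0 = e_i` and `e_i e_j = -δ_ij e_0 + ε_ijk e_k` for `i,j ≥ 1`. -/
def structC (i j k : Fin 8) : ℝ :=
  if i = 0 then (if j = k then 1 else 0)
  else if j = 0 then (if i = k then 1 else 0)
  else (if i = j ∧ k = 0 then (-1:ℝ) else 0) + eps i j k

/-- Octonion multiplication on ℝ⁸. -/
def octMul (x y : Oct) : Oct := WithLp.toLp 2 (fun k => ∑ i, ∑ j, x i * y j * structC i j k)

/-- Octonionic conjugation. -/
def octConj (x : Oct) : Oct := WithLp.toLp 2 (fun k => if k = 0 then x 0 else -(x k))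

/-- The triple cross product `X(u,v,w) = -u(v̄w) + ⟨u,v⟩w + ⟨v,w⟩u - ⟨w,u⟩v`. -/
def X3 (u v w : Oct) : Oct :=
  -octMul u (octMul (octConj v) w) + ⟪u, v⟫ • w + ⟪v, w⟫ • u - ⟪w, u⟫ • v

/-- The double cross product `u × v = uv + ⟨u,v⟩ e_0` (on imaginary octonions). -/
def cross2 (u v : Oct) : Oct := octMul u v + ⟪u, v⟫ • octe 0

/-! Skew-symmetry of `J = X3 u v` and its vanishing at `u` and `v` are polynomial identities in
the coordinates, read off the multiplication table. For orthonormal `u, v` one has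
`J p = -u(v̄p) + ⟪v, p⟫ u - ⟪p, u⟫ v`; since `‖u(v̄p)‖ = ‖p‖` and `J p ⊥ u, v`, this gives
`‖J p‖² = ‖p‖² - ⟪p, u⟫² - ⟪p, v⟫²`. Hence `J` is an isometry of `(u∧v)^⊥`, and a skew isometry
squares to `-1` because `‖J (J w) + w‖² = ‖J (J w)‖² - 2 ‖J w‖² + ‖w‖² = 0`. Summing the norm
formula over the standard basis gives `tr (Jᵗ J) = 8 - ‖u‖² - ‖v‖² = 6`. -/

lemma apply_apply_eq_neg_of_skew {E : Type*} [NormedAddCommGroup E] [InnerProductSpace ℝ E]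
    {J : E → E} (hJ : ∀ x y, ⟪J x, y⟫ = -⟪x, J y⟫) {w : E} (h₁ : ‖J w‖ = ‖w‖)
    (h₂ : ‖J (J w)‖ = ‖w‖) : J (J w) = -w := by
  have h : ‖J (J w) + w‖ ^ 2 = 0 := by
    rw [norm_add_sq_real, hJ, real_inner_self_eq_norm_sq, h₁, h₂]
    ring
  exact eq_neg_of_add_eq_zero_left (norm_eq_zero.mp (pow_eq_zero_iff two_ne_zero |>.mp h))

lemma octMul_apply_zero (x y : Oct) :
    octMul x y 0 =
      x 0 * y 0 - x 1 * y 1 - x 2 * y 2 - x 3 * y 3 -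
        x 4 * y 4 - x 5 * y 5 - x 6 * y 6 - x 7 * y 7 := by
  simp [octMul, Fin.sum_univ_eight, structC, eps, plusTriples]
  ring

lemma octMul_apply_one (x y : Oct) :
    octMul x y 1 =
      x 0 * y 1 + x 1 * y 0 + x 2 * y 3 - x 3 * y 2 +
        x 4 * y 5 - x 5 * y 4 - x 6 * y 7 + x 7 * y 6 := by
  simp [octMul, Fin.sum_univ_eight, structC, eps, plusTriples]
  ring

lemma octMul_apply_two (x y : Oct) :
    octMul x y 2 =
      x 0 * y 2 - x 1 * y 3 + x 2 * y 0 + x 3 * y 1 +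
        x 4 * y 6 + x 5 * y 7 - x 6 * y 4 - x 7 * y 5 := by
  simp [octMul, Fin.sum_univ_eight, structC, eps, plusTriples]
  ring

lemma octMul_apply_three (x y : Oct) :
    octMul x y 3 =
      x 0 * y 3 + x 1 * y 2 - x 2 * y 1 + x 3 * y 0 +
        x 4 * y 7 - x 5 * y 6 + x 6 * y 5 - x 7 * y 4 := by
  simp [octMul, Fin.sum_univ_eight, structC, eps, plusTriples]
  ring

lemma octMul_apply_four (x y : Oct) :
    octMul x y 4 =
      x 0 * y 4 - x 1 * y 5 - x 2 * y 6 - x 3 * y 7 +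
        x 4 * y 0 + x 5 * y 1 + x 6 * y 2 + x 7 * y 3 := by
  simp [octMul, Fin.sum_univ_eight, structC, eps, plusTriples]
  ring

lemma octMul_apply_five (x y : Oct) :
    octMul x y 5 =
      x 0 * y 5 + x 1 * y 4 - x 2 * y 7 + x 3 * y 6 -
        x 4 * y 1 + x 5 * y 0 - x 6 * y 3 + x 7 * y 2 := by
  simp [octMul, Fin.sum_univ_eight, structC, eps, plusTriples]
  ring

lemma octMul_apply_six (x y : Oct) :
    octMul x y 6 =
      x 0 * y 6 + x 1 * y 7 + x 2 * y 4 - x 3 * y 5 -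
        x 4 * y 2 + x 5 * y 3 + x 6 * y 0 - x 7 * y 1 := by
  simp [octMul, Fin.sum_univ_eight, structC, eps, plusTriples]
  ring

lemma octMul_apply_seven (x y : Oct) :
    octMul x y 7 =
      x 0 * y 7 - x 1 * y 6 + x 2 * y 5 + x 3 * y 4 -
        x 4 * y 3 - x 5 * y 2 + x 6 * y 1 + x 7 * y 0 := by
  simp [octMul, Fin.sum_univ_eight, structC, eps, plusTriples]
  ring

lemma octConj_apply (x : Oct) (k : Fin 8) : octConj x k = if k = 0 then x 0 else -x k := rfl

lemma inner_eq_sum_eight (x y : Oct) :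
    ⟪x, y⟫ = x 0 * y 0 + x 1 * y 1 + x 2 * y 2 + x 3 * y 3 +
      x 4 * y 4 + x 5 * y 5 + x 6 * y 6 + x 7 * y 7 := by
  simp [PiLp.inner_apply, Fin.sum_univ_eight, mul_comm]

lemma norm_octConj (x : Oct) : ‖octConj x‖ = ‖x‖ := by
  rw [← sq_eq_sq₀ (norm_nonneg _) (norm_nonneg _), ← real_inner_self_eq_norm_sq,
    ← real_inner_self_eq_norm_sq]
  simp only [inner_eq_sum_eight, octConj_apply, Fin.reduceEq, if_true, if_false]
  ring

lemma norm_octMul (x y : Oct) : ‖octMul x y‖ = ‖x‖ * ‖y‖ := by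
  rw [← sq_eq_sq₀ (norm_nonneg _) (by positivity), mul_pow]
  simp only [← real_inner_self_eq_norm_sq, inner_eq_sum_eight, octMul_apply_zero,
    octMul_apply_one, octMul_apply_two, octMul_apply_three, octMul_apply_four, octMul_apply_five,
    octMul_apply_six, octMul_apply_seven]
  ring

lemma inner_X3_eq_neg_inner_X3 (u v w z : Oct) : ⟪X3 u v w, z⟫ = -⟪w, X3 u v z⟫ := by
  simp only [X3, inner_eq_sum_eight, PiLp.add_apply, PiLp.sub_apply, PiLp.neg_apply,
    PiLp.smul_apply, smul_eq_mul, octMul_apply_zero, octMul_apply_one, octMul_apply_two,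
    octMul_apply_three, octMul_apply_four, octMul_apply_five, octMul_apply_six, octMul_apply_seven,
    octConj_apply, Fin.reduceEq, if_true, if_false]
  ring

lemma X3_same_first_third (u v : Oct) : X3 u v u = 0 :=
  ext_inner_right ℝ fun z => by
    simp only [X3, inner_zero_left, inner_eq_sum_eight, PiLp.add_apply, PiLp.sub_apply,
      PiLp.neg_apply, PiLp.smul_apply, smul_eq_mul, octMul_apply_zero, octMul_apply_one,
      octMul_apply_two, octMul_apply_three, octMul_apply_four, octMul_apply_five,
      octMul_apply_six, octMul_apply_seven, octConj_apply, Fin.reduceEq, if_true, if_false]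
    ring

lemma X3_same_second_third (u v : Oct) : X3 u v v = 0 :=
  ext_inner_right ℝ fun z => by
    simp only [X3, inner_zero_left, inner_eq_sum_eight, PiLp.add_apply, PiLp.sub_apply,
      PiLp.neg_apply, PiLp.smul_apply, smul_eq_mul, octMul_apply_zero, octMul_apply_one,
      octMul_apply_two, octMul_apply_three, octMul_apply_four, octMul_apply_five,
      octMul_apply_six, octMul_apply_seven, octConj_apply, Fin.reduceEq, if_true, if_false]
    ring

lemma inner_X3_first (u v w : Oct) : ⟪X3 u v w, u⟫ = 0 := by
  rw [inner_X3_eq_neg_inner_X3, X3_same_first_third, inner_zero_right, neg_zero]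

lemma inner_X3_second (u v w : Oct) : ⟪X3 u v w, v⟫ = 0 := by
  rw [inner_X3_eq_neg_inner_X3, X3_same_second_third, inner_zero_right, neg_zero]

lemma norm_X3_sq {u v : Oct} (hu : ‖u‖ = 1) (hv : ‖v‖ = 1) (huv : ⟪u, v⟫ = 0) (p : Oct) :
    ‖X3 u v p‖ ^ 2 = ‖p‖ ^ 2 - ⟪p, u⟫ ^ 2 - ⟪p, v⟫ ^ 2 := by
  set A := octMul u (octMul (octConj v) p)
  have hX : X3 u v p = -A + ⟪v, p⟫ • u - ⟪p, u⟫ • v := by rw [X3, huv, zero_smul, add_zero]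
  have hA : ‖A‖ = ‖p‖ := by simp only [A, norm_octMul, norm_octConj, hu, hv, one_mul]
  have huu : ⟪u, u⟫ = 1 := by rw [real_inner_self_eq_norm_sq, hu, one_pow]
  have hvv : ⟪v, v⟫ = 1 := by rw [real_inner_self_eq_norm_sq, hv, one_pow]
  have hvu : ⟪v, u⟫ = 0 := by rw [real_inner_comm, huv]
  have hAu : ⟪A, u⟫ = ⟪v, p⟫ := by
    have h := inner_X3_first u v p
    simp only [hX, inner_add_left, inner_sub_left, inner_neg_left, real_inner_smul_left, huu,
      hvu] at h
    linarith
  have hAv : ⟪A, v⟫ = -⟪p, u⟫ := by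
    have h := inner_X3_second u v p
    simp only [hX, inner_add_left, inner_sub_left, inner_neg_left, real_inner_smul_left, huv,
      hvv] at h
    linarith
  calc ‖X3 u v p‖ ^ 2 = ⟪X3 u v p, -A + ⟪v, p⟫ • u - ⟪p, u⟫ • v⟫ := by
        rw [← hX, real_inner_self_eq_norm_sq]
    _ = -⟪X3 u v p, A⟫ := by
        simp only [inner_add_right, inner_sub_right, inner_neg_right, real_inner_smul_right,
          inner_X3_first, inner_X3_second]
        ring
    _ = ‖A‖ ^ 2 - ⟪v, p⟫ * ⟪A, u⟫ + ⟪p, u⟫ * ⟪A, v⟫ := by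
        rw [hX, inner_sub_left, inner_add_left, inner_neg_left, real_inner_smul_left,
          real_inner_smul_left, real_inner_self_eq_norm_sq, real_inner_comm A u,
          real_inner_comm A v]
        ring
    _ = ‖p‖ ^ 2 - ⟪p, u⟫ ^ 2 - ⟪p, v⟫ ^ 2 := by
        rw [hA, hAu, hAv, real_inner_comm v]
        ring

lemma norm_X3_of_inner_eq_zero {u v : Oct} (hu : ‖u‖ = 1) (hv : ‖v‖ = 1) (huv : ⟪u, v⟫ = 0)
    {p : Oct} (hpu : ⟪p, u⟫ = 0) (hpv : ⟪p, v⟫ = 0) :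
    ‖X3 u v p‖ = ‖p‖ := by
  rw [← sq_eq_sq₀ (norm_nonneg _) (norm_nonneg _), norm_X3_sq hu hv huv, hpu, hpv]
  ring

lemma sum_inner_X3_octe_self {u v : Oct} (hu : ‖u‖ = 1) (hv : ‖v‖ = 1) (huv : ⟪u, v⟫ = 0) :
    ∑ k : Fin 8, ⟪X3 u v (octe k), X3 u v (octe k)⟫ = 6 := by
  have parseval (x : Oct) : ∑ k, ⟪octe k, x⟫ ^ 2 = ‖x‖ ^ 2 := by
    simp [octe, EuclideanSpace.inner_single_left, EuclideanSpace.norm_sq_eq]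
  have norm_octe (k : Fin 8) : ‖octe k‖ = 1 := by simp [octe]
  simp only [real_inner_self_eq_norm_sq, norm_X3_sq hu hv huv, Finset.sum_sub_distrib, parseval,
    norm_octe, hu, hv]
  norm_num

/-- For orthonormal `{u,v}` in ℝ⁸, the map `J_{u∧v}(w) = X(u,v,w)` is
skew-symmetric, vanishes on `span{u,v}`, preserves `(u∧v)^⊥`, squares to
`-id` there, and satisfies `tr(Jᵗ J) = 6`. -/
theorem stmt8 (u v : Oct) (hu : ‖u‖ = 1) (hv : ‖v‖ = 1) (huv : ⟪u, v⟫ = 0) :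
    (∀ w z : Oct, ⟪X3 u v w, z⟫ = -⟪w, X3 u v z⟫) ∧
    X3 u v u = 0 ∧ X3 u v v = 0 ∧
    (∀ w : Oct, ⟪w, u⟫ = 0 → ⟪w, v⟫ = 0 →
      ⟪X3 u v w, u⟫ = 0 ∧ ⟪X3 u v w, v⟫ = 0 ∧ X3 u v (X3 u v w) = -w) ∧
    (∑ k : Fin 8, ⟪X3 u v (octe k), X3 u v (octe k)⟫) = 6 := by
  refine ⟨inner_X3_eq_neg_inner_X3 u v, X3_same_first_third u v, X3_same_second_third u v,
    fun w hwu hwv => ⟨inner_X3_first u v w, inner_X3_second u v w, ?_⟩,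
    sum_inner_X3_octe_self hu hv huv⟩
  have hJw : ‖X3 u v w‖ = ‖w‖ := norm_X3_of_inner_eq_zero hu hv huv hwu hwv
  refine apply_apply_eq_neg_of_skew (inner_X3_eq_neg_inner_X3 u v) hJw ?_
  rw [norm_X3_of_inner_eq_zero hu hv huv (inner_X3_first u v w) (inner_X3_second u v w), hJw]
end
end

section
/- For the section 𝔍 of skew-symmetric normal operators on G(2,8) induced by the triple cross product: at the base point e_0∧e_1, the second covariant derivative along the coordinate geodesic direction satisfies ∇_{e_j^ℓ}∇_{E_j^ℓ}𝔍 = -J_{e_0∧e_1} + (e_j⊗e^j)J_{e_0∧e_1} + J_{e_0∧e_1}(e_j⊗e^j) for ℓ ∈ {0,1}, j ∈ {2,...,7}, and consequently Δ𝔍(e_0∧e_1) = -8 J_{e_0∧e_1}. -/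
/-!
Along the geodesic `γ_j^ℓ` the moving plane is spanned by `cos r • e_ℓ + sin r • e_j` and the
other basis vector, so by bilinearity of the triple cross product
`𝔍(γ_j^ℓ(r)) = cos r • J_{e₀∧e₁} + sin r • K` with `K` the operator of the plane in which `e_ℓ`
is replaced by `e_j`. Hence `J₁ = K` and `J₂ = -J_{e₀∧e₁}`, and the second covariant derivative
`π₀ (π₀' K - J_{e₀∧e₁} + K π₀') π₀` only involves the octonion structure constants, which are
integers: the identity for each `(ℓ, j)` is an identity of integer matrices, checked by evaluation.
Summing it over `ℓ` and `j`, `Σ_j e_j⊗e^j = π₀` and `π₀ J_{e₀∧e₁} = J_{e₀∧e₁} π₀ = J_{e₀∧e₁}`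
give `Δ𝔍 = 2 (-6 J + 2 J) = -8 J`.
-/

open scoped RealInnerProductSpace

noncomputable section

open Matrix

/-- The matrix of the skew-symmetric operator `J_{u∧v}(w) = X(u,v,w)`. -/
def Jmat (u v : Oct) : Matrix (Fin 8) (Fin 8) ℝ :=
  Matrix.of fun a b => (X3 u v (octe b)) a

def m0 (l : Fin 2) : Fin 8 := Fin.castLE (by norm_num) l

/-- The positively oriented orthonormal basis of the geodesic plane
`γ_j^ℓ(r)` of `G(2,8)` (index `ℓ+1` mod 2). -/
def bvec (l : Fin 2) (j : Fin 8) (r : ℝ) (m : Fin 2) : Oct :=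
  if m = l then Real.cos r • octe (m0 l) + Real.sin r • octe j
  else octe (m0 m)

/-- The section `𝔍` along the surface `P_{t,s} = γ_j^ℓ(t+s)`. -/
def Jsurf (l : Fin 2) (j : Fin 8) (t s : ℝ) : Matrix (Fin 8) (Fin 8) ℝ :=
  Jmat (bvec l j (t + s) 0) (bvec l j (t + s) 1)

def J1 (l : Fin 2) (j : Fin 8) : Matrix (Fin 8) (Fin 8) ℝ :=
  Matrix.of fun a b => deriv (fun s => Jsurf l j 0 s a b) 0

def J2 (l : Fin 2) (j : Fin 8) : Matrix (Fin 8) (Fin 8) ℝ :=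
  Matrix.of fun a b => deriv (fun t => deriv (fun s => Jsurf l j t s a b) 0) 0

/-- The orthogonal projection onto `(span{e₀,e₁})^⊥` as a matrix. -/
def pi0m : Matrix (Fin 8) (Fin 8) ℝ :=
  1 - Matrix.single 0 0 1 - Matrix.single 1 1 1

/-- `π₀' = -(e_j⊗e^ℓ + e_ℓ⊗e^j)`, the derivative at `t = 0` of the family
of normal projections along `γ_j^ℓ`. -/
def pi0'm (l : Fin 2) (j : Fin 8) : Matrix (Fin 8) (Fin 8) ℝ :=
  -(Matrix.single j (m0 l) 1 + Matrix.single (m0 l) j 1)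

/-- The second covariant derivative `∇_{e_j^ℓ}∇_{E_j^ℓ}𝔍` at `e₀∧e₁`,
computed as `π₀ (π₀' J₁ + J₂ + J₁ π₀') π₀`. -/
def covD2J (l : Fin 2) (j : Fin 8) : Matrix (Fin 8) (Fin 8) ℝ :=
  pi0m * (pi0'm l j * J1 l j + J2 l j + J1 l j * pi0'm l j) * pi0m

open Matrix

lemma octe_apply (i k : Fin 8) : octe i k = if k = i then 1 else 0 := by
  simp [octe]

lemma inner_octe (p q : Fin 8) : ⟪octe p, octe q⟫ = if q = p then (1 : ℝ) else 0 := by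
  simp [octe, EuclideanSpace.inner_single_left, eq_comm]

lemma octConj_octe (q : Fin 8) : octConj (octe q) = (if q = 0 then 1 else -1 : ℝ) • octe q := by
  ext k
  simp only [octConj, PiLp.toLp_apply, PiLp.smul_apply, smul_eq_mul, octe_apply]
  grind

lemma octConj_add (x y : Oct) : octConj (x + y) = octConj x + octConj y := by
  ext k
  simp only [octConj, PiLp.toLp_apply, PiLp.add_apply]
  split_ifs <;> ring

lemma octConj_smul (c : ℝ) (x : Oct) : octConj (c • x) = c • octConj x := by
  ext k
  simp only [octConj, PiLp.toLp_apply, PiLp.smul_apply, smul_eq_mul]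
  split_ifs <;> ring

lemma octMul_add_left (x y z : Oct) : octMul (x + y) z = octMul x z + octMul y z := by
  ext k
  simp only [octMul, PiLp.toLp_apply, PiLp.add_apply, add_mul, Finset.sum_add_distrib]

lemma octMul_add_right (x y z : Oct) : octMul z (x + y) = octMul z x + octMul z y := by
  ext k
  simp only [octMul, PiLp.toLp_apply, PiLp.add_apply, mul_add, add_mul, Finset.sum_add_distrib]

lemma octMul_smul_left (c : ℝ) (x y : Oct) : octMul (c • x) y = c • octMul x y := by
  ext k
  simp only [octMul, PiLp.toLp_apply, PiLp.smul_apply, smul_eq_mul, Finset.mul_sum]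
  congr! 2
  ring

lemma octMul_smul_right (c : ℝ) (x y : Oct) : octMul x (c • y) = c • octMul x y := by
  ext k
  simp only [octMul, PiLp.toLp_apply, PiLp.smul_apply, smul_eq_mul, Finset.mul_sum]
  congr! 2
  ring

lemma octMul_octe_left_apply (p : Fin 8) (y : Oct) (k : Fin 8) :
    octMul (octe p) y k = ∑ j, y j * structC p j k := by
  simp [octMul, octe_apply]

lemma octMul_octe_octe_apply (q b k : Fin 8) : octMul (octe q) (octe b) k = structC q b k := by
  simp [octMul_octe_left_apply, octe_apply]

lemma X3_smul_add_smul_left (c d : ℝ) (x y v w : Oct) :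
    X3 (c • x + d • y) v w = c • X3 x v w + d • X3 y v w := by
  simp only [X3, octMul_add_left, octMul_smul_left, inner_add_left, inner_add_right,
    real_inner_smul_left, real_inner_smul_right]
  module

lemma X3_smul_add_smul_middle (c d : ℝ) (u x y w : Oct) :
    X3 u (c • x + d • y) w = c • X3 u x w + d • X3 u y w := by
  simp only [X3, octConj_add, octConj_smul, octMul_add_left, octMul_smul_left,
    octMul_add_right, octMul_smul_right, inner_add_left, inner_add_right,
    real_inner_smul_left, real_inner_smul_right]
  module

lemma Jmat_smul_add_smul_left (c d : ℝ) (x y v : Oct) :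
    Jmat (c • x + d • y) v = c • Jmat x v + d • Jmat y v := by
  ext a b
  simp [Jmat, X3_smul_add_smul_left]

lemma Jmat_smul_add_smul_right (c d : ℝ) (u x y : Oct) :
    Jmat u (c • x + d • y) = c • Jmat u x + d • Jmat u y := by
  ext a b
  simp [Jmat, X3_smul_add_smul_middle]

/-- Integer copies of `eps` and `structC`, so that the matrix identities below can be decided
over `ℤ`. -/
def epsInt (i j k : Fin 8) : ℤ :=
  if plusTriples.any (fun t => decide ((i,j,k) = t ∨ (i,j,k) = (t.2.1, t.2.2, t.1) ∨
      (i,j,k) = (t.2.2, t.1, t.2.1))) then 1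
  else if plusTriples.any (fun t => decide ((i,j,k) = (t.1, t.2.2, t.2.1) ∨
      (i,j,k) = (t.2.2, t.2.1, t.1) ∨ (i,j,k) = (t.2.1, t.1, t.2.2))) then -1
  else 0

def structCInt (i j k : Fin 8) : ℤ :=
  if i = 0 then (if j = k then 1 else 0)
  else if j = 0 then (if i = k then 1 else 0)
  else (if i = j ∧ k = 0 then -1 else 0) + epsInt i j k

lemma structC_eq_cast (i j k : Fin 8) : structC i j k = structCInt i j k := by
  unfold structC structCInt eps epsInt
  split_ifs <;> norm_num

def JmatInt (p q : Fin 8) : Matrix (Fin 8) (Fin 8) ℤ :=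
  Matrix.of fun a b =>
    -((if q = 0 then 1 else -1) * ∑ m, structCInt q b m * structCInt p m a)
    + (if q = p then 1 else 0) * (if a = b then 1 else 0)
    + (if b = q then 1 else 0) * (if a = p then 1 else 0)
    - (if p = b then 1 else 0) * (if a = q then 1 else 0)

lemma Jmat_octe (p q : Fin 8) :
    Jmat (octe p) (octe q) = (Int.castRingHom ℝ).mapMatrix (JmatInt p q) := by
  ext a b
  have hmul : octMul (octe p) (octMul (octConj (octe q)) (octe b)) a
      = (if q = 0 then 1 else -1 : ℝ) * ∑ m, structC q b m * structC p m a := by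
    rw [octConj_octe, octMul_smul_left, octMul_smul_right, PiLp.smul_apply, smul_eq_mul,
      octMul_octe_left_apply]
    simp only [octMul_octe_octe_apply]
  simp only [Jmat, JmatInt, X3, of_apply, RingHom.mapMatrix_apply, map_apply, eq_intCast,
    PiLp.add_apply, PiLp.sub_apply, PiLp.neg_apply, PiLp.smul_apply, smul_eq_mul, inner_octe,
    octe_apply, hmul, structC_eq_cast]
  push_cast [apply_ite (Int.cast : ℤ → ℝ)]
  ring

def tangentJmat (l : Fin 2) (j : Fin 8) : Matrix (Fin 8) (Fin 8) ℝ :=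
  if l = 0 then Jmat (octe j) (octe 1) else Jmat (octe 0) (octe j)

lemma Jsurf_eq (l : Fin 2) (j : Fin 8) (t s : ℝ) :
    Jsurf l j t s = Real.cos (t + s) • Jmat (octe 0) (octe 1)
      + Real.sin (t + s) • tangentJmat l j := by
  fin_cases l
  · simp [Jsurf, bvec, m0, tangentJmat, Jmat_smul_add_smul_left]
  · simp [Jsurf, bvec, m0, tangentJmat, Jmat_smul_add_smul_right]

lemma hasDerivAt_cos_mul_add_sin_mul (A B r : ℝ) :
    HasDerivAt (fun r => Real.cos r * A + Real.sin r * B)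
      (Real.cos r * B + Real.sin r * -A) r :=
  (((Real.hasDerivAt_cos r).mul_const A).add ((Real.hasDerivAt_sin r).mul_const B)).congr_deriv
    (by ring)

lemma deriv_Jsurf_apply (l : Fin 2) (j : Fin 8) (t : ℝ) (a b : Fin 8) :
    deriv (fun s => Jsurf l j t s a b) 0
      = Real.cos t * tangentJmat l j a b + Real.sin t * -Jmat (octe 0) (octe 1) a b := by
  simp only [Jsurf_eq, Matrix.add_apply, Matrix.smul_apply, smul_eq_mul]
  simpa using ((hasDerivAt_cos_mul_add_sin_mul _ _ (t + 0)).comp_const_add t 0).deriv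

lemma J1_eq (l : Fin 2) (j : Fin 8) : J1 l j = tangentJmat l j := by
  ext a b
  simp [J1, deriv_Jsurf_apply]

lemma J2_eq (l : Fin 2) (j : Fin 8) : J2 l j = -Jmat (octe 0) (octe 1) := by
  ext a b
  simp [J2, deriv_Jsurf_apply]

def projInt : Matrix (Fin 8) (Fin 8) ℤ :=
  1 - single 0 0 1 - single 1 1 1

def projDerivInt (l : Fin 2) (j : Fin 8) : Matrix (Fin 8) (Fin 8) ℤ :=
  -(single j (m0 l) 1 + single (m0 l) j 1)

def tangentJmatInt (l : Fin 2) (j : Fin 8) : Matrix (Fin 8) (Fin 8) ℤ :=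
  if l = 0 then JmatInt j 1 else JmatInt 0 j

def covD2JInt (l : Fin 2) (j : Fin 8) : Matrix (Fin 8) (Fin 8) ℤ :=
  projInt * (projDerivInt l j * tangentJmatInt l j - JmatInt 0 1
    + tangentJmatInt l j * projDerivInt l j) * projInt

lemma pi0m_eq_map : pi0m = (Int.castRingHom ℝ).mapMatrix projInt := by
  simp only [pi0m, projInt, map_sub, map_one, RingHom.mapMatrix_apply, Matrix.map_single]

lemma pi0'm_eq_map (l : Fin 2) (j : Fin 8) :
    pi0'm l j = (Int.castRingHom ℝ).mapMatrix (projDerivInt l j) := by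
  simp only [pi0'm, projDerivInt, map_neg, map_add, map_one, RingHom.mapMatrix_apply,
    Matrix.map_single]

lemma tangentJmat_eq_map (l : Fin 2) (j : Fin 8) :
    tangentJmat l j = (Int.castRingHom ℝ).mapMatrix (tangentJmatInt l j) := by
  rw [tangentJmat, tangentJmatInt]
  split_ifs <;> rw [Jmat_octe]

lemma covD2J_eq_map (l : Fin 2) (j : Fin 8) :
    covD2J l j = (Int.castRingHom ℝ).mapMatrix (covD2JInt l j) := by
  rw [covD2J, J1_eq, J2_eq, pi0m_eq_map, pi0'm_eq_map, tangentJmat_eq_map, Jmat_octe, covD2JInt]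
  simp only [map_mul, map_add, sub_eq_add_neg, map_neg]

set_option maxRecDepth 100000 in
lemma covD2JInt_eq (l : Fin 2) (j : Fin 8) (hj : 2 ≤ (j : ℕ)) :
    covD2JInt l j = -JmatInt 0 1 + single j j 1 * JmatInt 0 1 + JmatInt 0 1 * single j j 1 := by
  revert l j hj
  decide

set_option maxRecDepth 10000 in
lemma projInt_mul_JmatInt : projInt * JmatInt 0 1 = JmatInt 0 1 := by
  decide

set_option maxRecDepth 10000 in
lemma JmatInt_mul_projInt : JmatInt 0 1 * projInt = JmatInt 0 1 := by
  decide

lemma covD2J_eq (l : Fin 2) (j : Fin 8) (hj : 2 ≤ (j : ℕ)) :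
    covD2J l j = -Jmat (octe 0) (octe 1) + single j j 1 * Jmat (octe 0) (octe 1)
      + Jmat (octe 0) (octe 1) * single j j 1 := by
  simp only [covD2J_eq_map, covD2JInt_eq l j hj, Jmat_octe, map_add, map_mul, map_neg,
    RingHom.mapMatrix_apply, Matrix.map_single, map_one]

lemma pi0m_mul_Jmat_octe_zero_one : pi0m * Jmat (octe 0) (octe 1) = Jmat (octe 0) (octe 1) := by
  rw [pi0m_eq_map, Jmat_octe, ← map_mul, projInt_mul_JmatInt]

lemma Jmat_octe_zero_one_mul_pi0m : Jmat (octe 0) (octe 1) * pi0m = Jmat (octe 0) (octe 1) := by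
  rw [pi0m_eq_map, Jmat_octe, ← map_mul, JmatInt_mul_projInt]

lemma sum_single_two_le_eq_pi0m :
    ∑ j ∈ Finset.univ.filter (fun j : Fin 8 => 2 ≤ (j : ℕ)), single j j (1 : ℝ) = pi0m := by
  have hlow : Finset.univ.filter (fun j : Fin 8 => ¬2 ≤ (j : ℕ)) = {0, 1} := by decide
  rw [pi0m, ← sum_single_one, ← Finset.sum_filter_add_sum_filter_not Finset.univ
    (fun j : Fin 8 => 2 ≤ (j : ℕ)), hlow, Finset.sum_pair (by decide)]
  abel

/-- `∇_{e_j^ℓ}∇_{E_j^ℓ}𝔍 = -J_{e₀∧e₁} + (e_j⊗e^j)J_{e₀∧e₁}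
+ J_{e₀∧e₁}(e_j⊗e^j)` and hence `Δ𝔍(e₀∧e₁) = Σ_{ℓ,j} ∇_{e_j^ℓ}∇_{E_j^ℓ}𝔍
= -8 J_{e₀∧e₁}`. -/
theorem stmt17 :
    (∀ (l : Fin 2) (j : Fin 8), 2 ≤ (j : ℕ) →
      covD2J l j = -Jmat (octe 0) (octe 1)
        + Matrix.single j j 1 * Jmat (octe 0) (octe 1)
        + Jmat (octe 0) (octe 1) * Matrix.single j j 1) ∧
    (∑ l : Fin 2, ∑ j ∈ Finset.univ.filter (fun j : Fin 8 => 2 ≤ (j : ℕ)),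
        covD2J l j) = (-8 : ℝ) • Jmat (octe 0) (octe 1) := by
  refine ⟨covD2J_eq, ?_⟩
  rw [Finset.sum_congr rfl fun l _ => Finset.sum_congr rfl fun j hj =>
    covD2J_eq l j (Finset.mem_filter.1 hj).2]
  simp only [Finset.sum_add_distrib, ← Finset.sum_mul, ← Finset.mul_sum,
    sum_single_two_le_eq_pi0m, pi0m_mul_Jmat_octe_zero_one, Jmat_octe_zero_one_mul_pi0m,
    Finset.sum_neg_distrib, Finset.sum_const]
  have hcard : (Finset.univ.filter fun j : Fin 8 => 2 ≤ (j : ℕ)).card = 6 := by decide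
  simp only [hcard, Finset.card_univ, Fintype.card_fin]
  module
end
end
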